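/- arXiv:math/0702594 — 3 statements merged into one kernel-verified Lean document; each statement's English description precedes it below -/
import Mathlib

section
/- The Melikian algebra M = A(2) ⊕ W(2) ⊕ W(2)~, with brackets defined by [D,Ẽ] = [D,E]~ + 2·div(D)·Ẽ, [D,f] = D(f) − 2·div(D)·f, [f₁D̃₁+f₂D̃₂, g₁D̃₁+g₂D̃₂] = f₁g₂ − f₂g₁, [f,Ẽ] = fE, and [f,g] = 2(gD₂(f) − fD₂(g))D̃₁ + 2(fD₁(g) − gD₁(f))D̃₂, satisfies the Jacobi identity, hence is a Lie algebra over F. -/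
open scoped BigOperators

namespace Melikian

/-- Index set for monomials in the truncated polynomial algebra
`A(2) = F[x₁,x₂]/(x₁⁵,x₂⁵)`. -/
abbrev Idx : Type := Fin 5 × Fin 5

/-- The truncated polynomial algebra `A(2)`, as functions on monomial exponents. -/
abbrev A (F : Type*) [Field F] : Type _ := Idx → F

variable {F : Type*} [Field F]

/-- The monomial `x^b = x₁^{b₁} x₂^{b₂}`. -/
def X (b : Idx) : A F := fun a => if a = b then 1 else 0

/-- Truncated multiplication of `A(2)`. -/
def mulA (f g : A F) : A F := fun a =>
  ∑ b : Idx, ∑ c : Idx,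
    if b.1.val + c.1.val = a.1.val ∧ b.2.val + c.2.val = a.2.val then f b * g c else 0

/-- Partial derivative `∂/∂x₁` on `A(2)`. -/
def d1 (f : A F) : A F := fun a =>
  if h : a.1.val + 1 < 5 then ((a.1.val + 1 : ℕ) : F) * f (⟨a.1.val + 1, h⟩, a.2) else 0

/-- Partial derivative `∂/∂x₂` on `A(2)`. -/
def d2 (f : A F) : A F := fun a =>
  if h : a.2.val + 1 < 5 then ((a.2.val + 1 : ℕ) : F) * f (a.1, ⟨a.2.val + 1, h⟩) else 0

/-- The Witt–Jacobson algebra `W(2)` as a free `A(2)`-module with basis `D₁, D₂`: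
an element `(f₁, f₂)` stands for `f₁D₁ + f₂D₂`. -/
abbrev W (F : Type*) [Field F] : Type _ := A F × A F

/-- Action of a derivation `D = f₁D₁+f₂D₂ ∈ W(2)` on `A(2)`. -/
def Dw (D : W F) (g : A F) : A F := mulA D.1 (d1 g) + mulA D.2 (d2 g)

/-- Divergence `div(f₁D₁+f₂D₂) = D₁(f₁) + D₂(f₂)`. -/
def divW (D : W F) : A F := d1 D.1 + d2 D.2

/-- The usual bracket of `W(2)`. -/
def brW (D E : W F) : W F := (Dw D E.1 - Dw E D.1, Dw D E.2 - Dw E D.2)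

/-- Multiplication of an element of `W(2)` by a truncated polynomial. -/
def smulA (f : A F) (D : W F) : W F := (mulA f D.1, mulA f D.2)

/-- The Melikian algebra `M = A(2) ⊕ W(2) ⊕ W(2)~` as an `F`-vector space. -/
abbrev Mel (F : Type*) [Field F] : Type _ := A F × W F × W F

/-- Inclusion of `A(2)` into `M`. -/
def ιA (f : A F) : Mel F := (f, 0, 0)

/-- Inclusion of `W(2)` into `M`. -/
def ιW (D : W F) : Mel F := (0, D, 0)

/-- Inclusion of the second copy `W(2)~` into `M`, `D ↦ D̃`. -/
def ιT (D : W F) : Mel F := (0, 0, D)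

/-- The Melikian bracket on `M = A(2) ⊕ W(2) ⊕ W(2)~`, defined by the rules
`[D,Ẽ] = [D,E]~ + 2 div(D) Ẽ`, `[D,f] = D(f) − 2 div(D) f`,
`[f₁D̃₁+f₂D̃₂, g₁D̃₁+g₂D̃₂] = f₁g₂ − f₂g₁`, `[f,Ẽ] = fE`,
`[f,g] = 2(gD₂(f) − fD₂(g))D̃₁ + 2(fD₁(g) − gD₁(f))D̃₂`,
extended bilinearly and antisymmetrically (with the standard bracket on `W(2)`). -/
def brM (u v : Mel F) : Mel F :=
  ( (Dw u.2.1 v.1 - (2 : F) • mulA (divW u.2.1) v.1)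
      - (Dw v.2.1 u.1 - (2 : F) • mulA (divW v.2.1) u.1)
      + (mulA u.2.2.1 v.2.2.2 - mulA u.2.2.2 v.2.2.1)
  , brW u.2.1 v.2.1 + smulA u.1 v.2.2 - smulA v.1 u.2.2
  , (brW u.2.1 v.2.2 + (2 : F) • smulA (divW u.2.1) v.2.2)
      - (brW v.2.1 u.2.2 + (2 : F) • smulA (divW v.2.1) u.2.2)
      + ((2 : F) • (mulA v.1 (d2 u.1) - mulA u.1 (d2 v.1)),
         (2 : F) • (mulA u.1 (d1 v.1) - mulA v.1 (d1 u.1))) )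

/-- `x^b D_i` as an element of `W(2)` (`i = 0` stands for `D₁`, `i = 1` for `D₂`). -/
def wOf (i : Fin 2) (b : Idx) : W F := if i = 0 then (X b, 0) else (0, X b)

/-- The element `x₁D₁ ∈ M`. -/
def x1D1 : Mel F := ιW (X (1, 0), 0)

/-- The element `x₂D₂ ∈ M`. -/
def x2D2 : Mel F := ιW (0, X (0, 1))

/-- The element `1 ∈ A(2) ⊂ M`. -/
def oneM : Mel F := ιA (X (0, 0))

/-- The element `D_{i+1} ∈ W(2) ⊂ M`. -/
def DD (i : Fin 2) : Mel F := ιW (wOf i (0, 0))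

/-- The element `D̃_{i+1} ∈ W(2)~ ⊂ M`. -/
def TT (i : Fin 2) : Mel F := ιT (wOf i (0, 0))

/-- Total degree of a monomial exponent. -/
def degA (b : Idx) : ℤ := (b.1.val : ℤ) + (b.2.val : ℤ)

/-- The degree-`d` piece `M_d` of the `ℤ`-grading of the Melikian algebra:
`deg_M(f) = 3 deg(f) − 2` on `A(2)`, `deg_M(x^bD_i) = 3(|b|−1)` on `W(2)`, and
`deg_M(x^bD̃_i) = 3(|b|−1)+2` on `W(2)~`. -/
def Md (d : ℤ) : Submodule F (Mel F) :=
  Submodule.span F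
    ( {m | ∃ b : Idx, m = ιA (X b) ∧ d = 3 * degA b - 2}
      ∪ {m | ∃ b : Idx, ∃ i : Fin 2, m = ιW (wOf i b) ∧ d = 3 * (degA b - 1)}
      ∪ {m | ∃ b : Idx, ∃ i : Fin 2, m = ιT (wOf i b) ∧ d = 3 * (degA b - 1) + 2} )

/-- The part `M_{≥ d}` of the Melikian algebra. -/
def Mge (d : ℤ) : Submodule F (Mel F) := ⨆ e : ℤ, ⨆ _ : d ≤ e, (Md e : Submodule F (Mel F))

/-- The squaring `Sq(γ)(x,y) = Σ_{k=1}^{4} [γ^k(x), γ^{5−k}(y)] / (k!(5−k)!)`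
of an operator `γ` on the Melikian algebra (characteristic 5). -/
def melSq (γ : Mel F → Mel F) (x y : Mel F) : Mel F :=
  ∑ k ∈ Finset.Icc 1 4,
    ((Nat.factorial k * Nat.factorial (5 - k) : ℕ) : F)⁻¹ • brM (γ^[k] x) (γ^[5 - k] y)

/-- The Chevalley–Eilenberg coboundary of a linear 1-cochain of `M` with values in the
adjoint representation. -/
def cob (g : Mel F →ₗ[F] Mel F) (x y : Mel F) : Mel F :=
  brM x (g y) - brM y (g x) - g (brM x y)



/-! ### Auxiliary machinery: transfer to `MvPolynomial (Fin 2) F` -/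

noncomputable section Aux

/-- Exponent of a monomial index as a `Finsupp`. -/
def eIdx (b : Idx) : Fin 2 →₀ ℕ := Finsupp.single 0 b.1.val + Finsupp.single 1 b.2.val

@[simp] lemma eIdx_apply0 (b : Idx) : eIdx b 0 = b.1.val := by simp [eIdx]
@[simp] lemma eIdx_apply1 (b : Idx) : eIdx b 1 = b.2.val := by
  simp [eIdx, Finsupp.single_apply]

lemma finsupp2_ext {m m' : Fin 2 →₀ ℕ} (h0 : m 0 = m' 0) (h1 : m 1 = m' 1) : m = m' := by
  ext i; fin_cases i <;> assumption

/-- Decoding of exponents. -/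
def decI (d : Fin 2 →₀ ℕ) : Idx :=
  (⟨d 0 % 5, Nat.mod_lt _ (by norm_num)⟩, ⟨d 1 % 5, Nat.mod_lt _ (by norm_num)⟩)

@[simp] lemma decI_eIdx (b : Idx) : decI (eIdx b) = b := by
  unfold decI; ext <;> simp [Nat.mod_eq_of_lt (Fin.is_lt _)]

lemma eIdx_decI {d : Fin 2 →₀ ℕ} (h0 : d 0 < 5) (h1 : d 1 < 5) : eIdx (decI d) = d := by
  refine finsupp2_ext ?_ ?_ <;> simp [decI, Nat.mod_eq_of_lt, h0, h1]

lemma eIdx_inj {b c : Idx} (h : eIdx b = eIdx c) : b = c := by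
  have := congrArg decI h; simpa using this

/-- Truncation map from polynomials to `A(2)`. -/
def piA (p : MvPolynomial (Fin 2) F) : A F := fun a => MvPolynomial.coeff (eIdx a) p

/-- Section of the truncation map. -/
def toP (f : A F) : MvPolynomial (Fin 2) F := ∑ b : Idx, MvPolynomial.monomial (eIdx b) (f b)

lemma piA_toP (f : A F) : piA (toP f) = f := by
  funext a
  unfold piA toP
  rw [MvPolynomial.coeff_sum]
  rw [Finset.sum_eq_single a]
  · simp [MvPolynomial.coeff_monomial]
  · intro b _ hb
    rw [MvPolynomial.coeff_monomial, if_neg (fun h => hb (eIdx_inj h))]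
  · simp

lemma add_piA (p q : MvPolynomial (Fin 2) F) : piA p + piA q = piA (p + q) := by
  funext a; simp [piA, MvPolynomial.coeff_add]

lemma sub_piA (p q : MvPolynomial (Fin 2) F) : piA p - piA q = piA (p - q) := by
  funext a; simp [piA, MvPolynomial.coeff_sub]

lemma neg_piA (p : MvPolynomial (Fin 2) F) : -piA p = piA (-p) := by
  funext a; simp [piA]

lemma smul_piA (c : F) (p : MvPolynomial (Fin 2) F) : c • piA p = piA (c • p) := by
  funext a; simp [piA, MvPolynomial.coeff_smul]

lemma zero_piA : (0 : A F) = piA 0 := by funext a; simp [piA]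

lemma piA_eq_zero {p : MvPolynomial (Fin 2) F} (h : p = 0) : piA p = (0 : A F) := by
  rw [h, ← zero_piA]

lemma mulA_piA (p q : MvPolynomial (Fin 2) F) : mulA (piA p) (piA q) = piA (p * q) := by
  funext a
  unfold piA mulA
  rw [MvPolynomial.coeff_mul]
  rw [← Finset.sum_product']
  rw [← Finset.sum_filter]
  refine Finset.sum_nbij' (fun x => (eIdx x.1, eIdx x.2)) (fun y => (decI y.1, decI y.2))
    ?_ ?_ ?_ ?_ ?_
  · rintro ⟨b, c⟩ hx
    simp only [Finset.mem_filter] at hx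
    rw [Finset.HasAntidiagonal.mem_antidiagonal]
    exact finsupp2_ext (by simp [hx.2.1]) (by simp [hx.2.2])
  · rintro ⟨u, v⟩ hy
    rw [Finset.HasAntidiagonal.mem_antidiagonal] at hy
    have h0 : u 0 + v 0 = a.1.val := by
      have := congrArg (fun m => m 0) hy; simpa using this
    have h1 : u 1 + v 1 = a.2.val := by
      have := congrArg (fun m => m 1) hy; simpa using this
    have hu0 : u 0 < 5 := lt_of_le_of_lt (le_trans (Nat.le_add_right _ _) h0.le) a.1.is_lt
    have hv0 : v 0 < 5 := lt_of_le_of_lt (le_trans (Nat.le_add_left _ _) h0.le) a.1.is_lt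
    have hu1 : u 1 < 5 := lt_of_le_of_lt (le_trans (Nat.le_add_right _ _) h1.le) a.2.is_lt
    have hv1 : v 1 < 5 := lt_of_le_of_lt (le_trans (Nat.le_add_left _ _) h1.le) a.2.is_lt
    simp only [Finset.mem_filter, Finset.mem_product, Finset.mem_univ, and_self, true_and]
    constructor
    · simpa [decI, Nat.mod_eq_of_lt, hu0, hv0] using h0
    · simpa [decI, Nat.mod_eq_of_lt, hu1, hv1] using h1
  · rintro ⟨b, c⟩ _; simp
  · rintro ⟨u, v⟩ hy
    rw [Finset.HasAntidiagonal.mem_antidiagonal] at hy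
    have h0 : u 0 + v 0 = a.1.val := by
      have := congrArg (fun m => m 0) hy; simpa using this
    have h1 : u 1 + v 1 = a.2.val := by
      have := congrArg (fun m => m 1) hy; simpa using this
    have hu0 : u 0 < 5 := lt_of_le_of_lt (le_trans (Nat.le_add_right _ _) h0.le) a.1.is_lt
    have hv0 : v 0 < 5 := lt_of_le_of_lt (le_trans (Nat.le_add_left _ _) h0.le) a.1.is_lt
    have hu1 : u 1 < 5 := lt_of_le_of_lt (le_trans (Nat.le_add_right _ _) h1.le) a.2.is_lt
    have hv1 : v 1 < 5 := lt_of_le_of_lt (le_trans (Nat.le_add_left _ _) h1.le) a.2.is_lt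
    simp [eIdx_decI, hu0, hv0, hu1, hv1]
  · rintro ⟨b, c⟩ _; simp

lemma coeff_pderiv (i : Fin 2) (m : Fin 2 →₀ ℕ) (p : MvPolynomial (Fin 2) F) :
    MvPolynomial.coeff m (MvPolynomial.pderiv i p)
      = ((m i + 1 : ℕ) : F) * MvPolynomial.coeff (m + Finsupp.single i 1) p := by
  induction p using MvPolynomial.induction_on' with
  | add p q hp hq => simp [map_add, hp, hq, mul_add]
  | monomial d c =>
      rw [MvPolynomial.pderiv_monomial]
      rw [MvPolynomial.coeff_monomial, MvPolynomial.coeff_monomial]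
      rcases Nat.eq_zero_or_pos (d i) with h | h
      · have hne : d ≠ m + Finsupp.single i 1 := by
          intro hd
          have := congrArg (fun n => n i) hd
          simp [h] at this
        simp [h, hne]
      · have hle : Finsupp.single i 1 ≤ d := by
          rw [Finsupp.single_le_iff]; omega
        by_cases hd : d = m + Finsupp.single i 1
        · subst hd
          rw [if_pos (by simp), if_pos rfl]
          rw [Finsupp.add_apply, Finsupp.single_eq_same]
          push_cast
          ring
        · rw [if_neg, if_neg hd]
          · ring_nf
          · intro hsub
            exact hd (by rw [← hsub, tsub_add_cancel_of_le hle])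

lemma pd_swap (p : MvPolynomial (Fin 2) F) :
    MvPolynomial.pderiv (1 : Fin 2) (MvPolynomial.pderiv 0 p)
      = MvPolynomial.pderiv 0 (MvPolynomial.pderiv 1 p) := by
  induction p using MvPolynomial.induction_on' with
  | add p q hp hq => simp [map_add, hp, hq]
  | monomial d c =>
      simp only [MvPolynomial.pderiv_monomial]
      rw [Finsupp.tsub_apply, Finsupp.tsub_apply]
      simp [Finsupp.single_apply, tsub_right_comm]
      ring_nf

lemma pd_two (i : Fin 2) :
    MvPolynomial.pderiv i (2 : MvPolynomial (Fin 2) F) = 0 := by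
  have h : (2 : MvPolynomial (Fin 2) F) = MvPolynomial.C (2:F) := by
    rw [map_ofNat]
  rw [h, MvPolynomial.pderiv_C]

lemma five_eq_zero [CharP F 5] : (5 : MvPolynomial (Fin 2) F) = 0 := by
  have h : (5 : MvPolynomial (Fin 2) F) = MvPolynomial.C (5:F) := by
    rw [map_ofNat]
  have h5 : (5:F) = 0 := by
    have h55 : (5:F) = 0 := by exact_mod_cast CharP.cast_eq_zero F 5
    rw [show (5:F) = 5 * 1 by norm_num, h55, zero_mul]
  rw [h, h5, map_zero]

lemma ten_eq_zero [CharP F 5] : (10 : MvPolynomial (Fin 2) F) = 0 := by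
  have h : (10 : MvPolynomial (Fin 2) F) = MvPolynomial.C (10:F) := by
    rw [map_ofNat]
  have h5 : (10:F) = 0 := by
    have h55 : (5:F) = 0 := by exact_mod_cast CharP.cast_eq_zero F 5
    rw [show (10:F) = 5 * 2 by norm_num, h55, zero_mul]
  rw [h, h5, map_zero]

lemma fifteen_eq_zero [CharP F 5] : (15 : MvPolynomial (Fin 2) F) = 0 := by
  have h : (15 : MvPolynomial (Fin 2) F) = MvPolynomial.C (15:F) := by
    rw [map_ofNat]
  have h5 : (15:F) = 0 := by
    have h55 : (5:F) = 0 := by exact_mod_cast CharP.cast_eq_zero F 5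
    rw [show (15:F) = 5 * 3 by norm_num, h55, zero_mul]
  rw [h, h5, map_zero]

lemma twenty_eq_zero [CharP F 5] : (20 : MvPolynomial (Fin 2) F) = 0 := by
  have h : (20 : MvPolynomial (Fin 2) F) = MvPolynomial.C (20:F) := by
    rw [map_ofNat]
  have h5 : (20:F) = 0 := by
    have h55 : (5:F) = 0 := by exact_mod_cast CharP.cast_eq_zero F 5
    rw [show (20:F) = 5 * 4 by norm_num, h55, zero_mul]
  rw [h, h5, map_zero]

lemma twentyfive_eq_zero [CharP F 5] : (25 : MvPolynomial (Fin 2) F) = 0 := by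
  have h : (25 : MvPolynomial (Fin 2) F) = MvPolynomial.C (25:F) := by
    rw [map_ofNat]
  have h5 : (25:F) = 0 := by
    have h55 : (5:F) = 0 := by exact_mod_cast CharP.cast_eq_zero F 5
    rw [show (25:F) = 5 * 5 by norm_num, h55, zero_mul]
  rw [h, h5, map_zero]

lemma thirty_eq_zero [CharP F 5] : (30 : MvPolynomial (Fin 2) F) = 0 := by
  have h : (30 : MvPolynomial (Fin 2) F) = MvPolynomial.C (30:F) := by
    rw [map_ofNat]
  have h5 : (30:F) = 0 := by
    have h55 : (5:F) = 0 := by exact_mod_cast CharP.cast_eq_zero F 5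
    rw [show (30:F) = 5 * 6 by norm_num, h55, zero_mul]
  rw [h, h5, map_zero]

lemma thirtyfive_eq_zero [CharP F 5] : (35 : MvPolynomial (Fin 2) F) = 0 := by
  have h : (35 : MvPolynomial (Fin 2) F) = MvPolynomial.C (35:F) := by
    rw [map_ofNat]
  have h5 : (35:F) = 0 := by
    have h55 : (5:F) = 0 := by exact_mod_cast CharP.cast_eq_zero F 5
    rw [show (35:F) = 5 * 7 by norm_num, h55, zero_mul]
  rw [h, h5, map_zero]

lemma forty_eq_zero [CharP F 5] : (40 : MvPolynomial (Fin 2) F) = 0 := by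
  have h : (40 : MvPolynomial (Fin 2) F) = MvPolynomial.C (40:F) := by
    rw [map_ofNat]
  have h5 : (40:F) = 0 := by
    have h55 : (5:F) = 0 := by exact_mod_cast CharP.cast_eq_zero F 5
    rw [show (40:F) = 5 * 8 by norm_num, h55, zero_mul]
  rw [h, h5, map_zero]


lemma d1_piA [CharP F 5] (p : MvPolynomial (Fin 2) F) :
    d1 (piA p) = piA (MvPolynomial.pderiv 0 p) := by
  funext a
  show _ = MvPolynomial.coeff (eIdx a) _
  rw [coeff_pderiv]
  unfold d1 piA
  split
  · next h =>
      congr 2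
      · simp
      · refine finsupp2_ext ?_ ?_
        · rw [Finsupp.add_apply]; simp [Finsupp.single_apply]
        · rw [Finsupp.add_apply]; simp [Finsupp.single_apply]
  · next h =>
      have h5 : a.1.val + 1 = 5 := by omega
      rw [eIdx_apply0, h5]
      have h0 : ((5:ℕ):F) = 0 := CharP.cast_eq_zero F 5
      rw [h0, zero_mul]

lemma d2_piA [CharP F 5] (p : MvPolynomial (Fin 2) F) :
    d2 (piA p) = piA (MvPolynomial.pderiv 1 p) := by
  funext a
  show _ = MvPolynomial.coeff (eIdx a) _
  rw [coeff_pderiv]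
  unfold d2 piA
  split
  · next h =>
      congr 2
      · simp
      · refine finsupp2_ext ?_ ?_
        · rw [Finsupp.add_apply]; simp [Finsupp.single_apply]
        · rw [Finsupp.add_apply]; simp [Finsupp.single_apply]
  · next h =>
      have h5 : a.2.val + 1 = 5 := by omega
      rw [eIdx_apply1, h5]
      have h0 : ((5:ℕ):F) = 0 := CharP.cast_eq_zero F 5
      rw [h0, zero_mul]

/-- Represent an element of `Mel F` by five polynomials. -/
lemma mel_repr (x : Mel F) : ∃ p1 p2 p3 p4 p5 : MvPolynomial (Fin 2) F,
    x = (piA p1, (piA p2, piA p3), (piA p4, piA p5)) :=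
  ⟨toP x.1, toP x.2.1.1, toP x.2.1.2, toP x.2.2.1, toP x.2.2.2, by
    simp [piA_toP]⟩

end Aux

set_option maxHeartbeats 4000000 in
/-- The Melikian bracket is bilinear, antisymmetric and satisfies the Jacobi identity,
hence makes `M = A(2) ⊕ W(2) ⊕ W(2)~` a Lie algebra over `F`. -/
theorem melikian_is_lie_algebra (F : Type*) [Field F] [CharP F 5] :
    (∀ y : Mel F, IsLinearMap F fun x => brM x y) ∧
    (∀ x : Mel F, IsLinearMap F (brM x)) ∧
    (∀ x y : Mel F, brM x y = - brM y x) ∧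
    (∀ x y z : Mel F, brM x (brM y z) + brM y (brM z x) + brM z (brM x y) = 0) := by
  refine ⟨?_, ?_, ?_, ?_⟩
  · -- linear in the first argument
    intro y
    constructor
    · intro x x'
      obtain ⟨p1,p2,p3,p4,p5,rfl⟩ := mel_repr x
      obtain ⟨r1,r2,r3,r4,r5,rfl⟩ := mel_repr x'
      obtain ⟨q1,q2,q3,q4,q5,rfl⟩ := mel_repr y
      simp only [Prod.mk_add_mk, add_piA]
      simp only [brM, brW, Dw, divW, smulA]
      simp only [mulA_piA, d1_piA, d2_piA, add_piA, sub_piA, neg_piA, smul_piA,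
        Prod.mk_add_mk, Prod.mk_sub_mk, Prod.neg_mk, Prod.smul_mk, Prod.mk.injEq]
      refine ⟨?_, ⟨?_, ?_⟩, ?_, ?_⟩ <;>
      · try congr 1
        try simp only [map_add, map_sub, MvPolynomial.pderiv_mul, pd_swap,
          MvPolynomial.smul_eq_C_mul, map_ofNat, MvPolynomial.pderiv_C, pd_two]
        try ring_nf
    · intro c x
      obtain ⟨p1,p2,p3,p4,p5,rfl⟩ := mel_repr x
      obtain ⟨q1,q2,q3,q4,q5,rfl⟩ := mel_repr y
      simp only [Prod.smul_mk, smul_piA]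
      simp only [brM, brW, Dw, divW, smulA]
      simp only [mulA_piA, d1_piA, d2_piA, add_piA, sub_piA, neg_piA, smul_piA,
        Prod.mk_add_mk, Prod.mk_sub_mk, Prod.neg_mk, Prod.smul_mk, Prod.mk.injEq]
      refine ⟨?_, ⟨?_, ?_⟩, ?_, ?_⟩ <;>
      · try congr 1
        try simp only [map_add, map_sub, MvPolynomial.pderiv_mul, pd_swap,
          MvPolynomial.smul_eq_C_mul, map_ofNat, MvPolynomial.pderiv_C, pd_two]
        try ring_nf
  · -- linear in the second argument
    intro x
    constructor
    · intro y y'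
      obtain ⟨p1,p2,p3,p4,p5,rfl⟩ := mel_repr x
      obtain ⟨q1,q2,q3,q4,q5,rfl⟩ := mel_repr y
      obtain ⟨r1,r2,r3,r4,r5,rfl⟩ := mel_repr y'
      simp only [Prod.mk_add_mk, add_piA]
      simp only [brM, brW, Dw, divW, smulA]
      simp only [mulA_piA, d1_piA, d2_piA, add_piA, sub_piA, neg_piA, smul_piA,
        Prod.mk_add_mk, Prod.mk_sub_mk, Prod.neg_mk, Prod.smul_mk, Prod.mk.injEq]
      refine ⟨?_, ⟨?_, ?_⟩, ?_, ?_⟩ <;>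
      · try congr 1
        try simp only [map_add, map_sub, MvPolynomial.pderiv_mul, pd_swap,
          MvPolynomial.smul_eq_C_mul, map_ofNat, MvPolynomial.pderiv_C, pd_two]
        try ring_nf
    · intro c y
      obtain ⟨p1,p2,p3,p4,p5,rfl⟩ := mel_repr x
      obtain ⟨q1,q2,q3,q4,q5,rfl⟩ := mel_repr y
      simp only [Prod.smul_mk, smul_piA]
      simp only [brM, brW, Dw, divW, smulA]
      simp only [mulA_piA, d1_piA, d2_piA, add_piA, sub_piA, neg_piA, smul_piA,
        Prod.mk_add_mk, Prod.mk_sub_mk, Prod.neg_mk, Prod.smul_mk, Prod.mk.injEq]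
      refine ⟨?_, ⟨?_, ?_⟩, ?_, ?_⟩ <;>
      · try congr 1
        try simp only [map_add, map_sub, MvPolynomial.pderiv_mul, pd_swap,
          MvPolynomial.smul_eq_C_mul, map_ofNat, MvPolynomial.pderiv_C, pd_two]
        try ring_nf
  · -- antisymmetry
    intro x y
    obtain ⟨p1,p2,p3,p4,p5,rfl⟩ := mel_repr x
    obtain ⟨q1,q2,q3,q4,q5,rfl⟩ := mel_repr y
    simp only [brM, brW, Dw, divW, smulA]
    simp only [mulA_piA, d1_piA, d2_piA, add_piA, sub_piA, neg_piA, smul_piA,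
      Prod.mk_add_mk, Prod.mk_sub_mk, Prod.neg_mk, Prod.smul_mk, Prod.mk.injEq]
    refine ⟨?_, ⟨?_, ?_⟩, ?_, ?_⟩ <;>
    · try congr 1
      try simp only [map_add, map_sub, MvPolynomial.pderiv_mul, pd_swap,
        MvPolynomial.smul_eq_C_mul, map_ofNat, MvPolynomial.pderiv_C, pd_two]
      try ring_nf
  · -- the Jacobi identity
    intro x y z
    obtain ⟨p1,p2,p3,p4,p5,rfl⟩ := mel_repr x
    obtain ⟨q1,q2,q3,q4,q5,rfl⟩ := mel_repr y
    obtain ⟨r1,r2,r3,r4,r5,rfl⟩ := mel_repr z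
    simp only [brM, brW, Dw, divW, smulA]
    simp only [mulA_piA, d1_piA, d2_piA, add_piA, sub_piA, neg_piA, smul_piA,
      Prod.mk_add_mk, Prod.mk_sub_mk, Prod.neg_mk, Prod.smul_mk, Prod.mk.injEq,
      Prod.mk_eq_zero]
    refine ⟨?_, ⟨?_, ?_⟩, ?_, ?_⟩ <;>
    · apply piA_eq_zero
      simp only [map_add, map_sub, MvPolynomial.pderiv_mul, pd_swap,
        MvPolynomial.smul_eq_C_mul, map_ofNat, MvPolynomial.pderiv_C, pd_two]
      try ring_nf
      try simp only [five_eq_zero, ten_eq_zero, fifteen_eq_zero, twenty_eq_zero,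
        twentyfive_eq_zero, thirty_eq_zero, thirtyfive_eq_zero, forty_eq_zero,
        mul_zero, zero_mul, add_zero, zero_add, neg_zero, sub_zero, neg_add_rev]
      try ring_nf


end Melikian
end

section
/- The assignment deg_M(D) = 3·deg(D) for D ∈ W(2), deg_M(Ẽ) = 3·deg(E) + 2 for Ẽ ∈ W(2)~, and deg_M(f) = 3·deg(f) − 2 for f ∈ A(2), defines a Z-grading on the Melikian algebra M, i.e., [M_d, M_e] ⊆ M_{d+e} for all d, e ∈ Z. -/
open scoped BigOperators

namespace Melikian

variable {F : Type*} [Field F]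

/-! ### Auxiliary development for the grading theorem -/

section GradingAux

/-- Homogeneity of degree `n` for elements of `A(2)`. -/
def HA (n : ℤ) (f : A F) : Prop := ∀ a : Idx, degA a ≠ n → f a = 0

/-- Homogeneity of degree `n` for elements of `W(2)`. -/
def HW (n : ℤ) (D : W F) : Prop := HA (n + 1) D.1 ∧ HA (n + 1) D.2

lemma HA_zero (n : ℤ) : HA n (0 : A F) := fun _ _ => rfl

lemma HA_of_eq {m n : ℤ} {f : A F} (h : HA m f) (e : m = n) : HA n f := e ▸ h

lemma HA_add {n : ℤ} {f g : A F} (hf : HA n f) (hg : HA n g) : HA n (f + g) := fun a ha => by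
  show f a + g a = 0
  rw [hf a ha, hg a ha, add_zero]

lemma HA_neg {n : ℤ} {f : A F} (hf : HA n f) : HA n (-f) := fun a ha => by
  show -(f a) = 0
  rw [hf a ha, neg_zero]

lemma HA_sub {n : ℤ} {f g : A F} (hf : HA n f) (hg : HA n g) : HA n (f - g) := fun a ha => by
  show f a - g a = 0
  rw [hf a ha, hg a ha, sub_zero]

lemma HA_smul {n : ℤ} (c : F) {f : A F} (hf : HA n f) : HA n (c • f) := fun a ha => by
  show c * f a = 0
  rw [hf a ha, mul_zero]

lemma HA_mul {m n k : ℤ} {f g : A F} (hf : HA m f) (hg : HA n g) (hk : k = m + n) :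
    HA k (mulA f g) := by
  intro a ha
  apply Finset.sum_eq_zero; intro b _
  apply Finset.sum_eq_zero; intro c _
  split_ifs with h
  · by_cases hb : degA b = m
    · have hc : degA c ≠ n := by
        simp only [degA] at ha hb ⊢
        omega
      rw [hg c hc, mul_zero]
    · rw [hf b hb, zero_mul]
  · rfl

lemma HA_d1 {n : ℤ} {f : A F} (hf : HA n f) : HA (n - 1) (d1 f) := by
  intro a ha
  unfold d1
  split
  · next h =>
      rw [hf _ ?_, mul_zero]
      simp only [degA] at ha ⊢
      push_cast
      omega
  · rfl

lemma HA_d2 {n : ℤ} {f : A F} (hf : HA n f) : HA (n - 1) (d2 f) := by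
  intro a ha
  unfold d2
  split
  · next h =>
      rw [hf _ ?_, mul_zero]
      simp only [degA] at ha ⊢
      push_cast
      omega
  · rfl

lemma HA_X (b : Idx) : HA (degA b) (X b : A F) := by
  intro a ha
  unfold X
  rw [if_neg]
  intro h; exact ha (by rw [h])

lemma HW_zero (n : ℤ) : HW n (0 : W F) := ⟨HA_zero _, HA_zero _⟩

lemma HW_of_eq {m n : ℤ} {D : W F} (h : HW m D) (e : m = n) : HW n D := e ▸ h

lemma HW_add {n : ℤ} {D E : W F} (hD : HW n D) (hE : HW n E) : HW n (D + E) :=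
  ⟨HA_add hD.1 hE.1, HA_add hD.2 hE.2⟩

lemma HW_sub {n : ℤ} {D E : W F} (hD : HW n D) (hE : HW n E) : HW n (D - E) :=
  ⟨HA_sub hD.1 hE.1, HA_sub hD.2 hE.2⟩

lemma HW_neg {n : ℤ} {D : W F} (hD : HW n D) : HW n (-D) :=
  ⟨HA_neg hD.1, HA_neg hD.2⟩

lemma HW_smul {n : ℤ} (c : F) {D : W F} (hD : HW n D) : HW n (c • D) :=
  ⟨HA_smul c hD.1, HA_smul c hD.2⟩

lemma HA_Dw {m n k : ℤ} {D : W F} {g : A F} (hD : HW m D) (hg : HA n g) (hk : k = m + n) :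
    HA k (Dw D g) :=
  HA_add (HA_mul hD.1 (HA_d1 hg) (by omega)) (HA_mul hD.2 (HA_d2 hg) (by omega))

lemma HA_div {m k : ℤ} {D : W F} (hD : HW m D) (hk : k = m) : HA k (divW D) :=
  HA_add (HA_of_eq (HA_d1 hD.1) (by omega)) (HA_of_eq (HA_d2 hD.2) (by omega))

lemma HW_br {m n k : ℤ} {D E : W F} (hD : HW m D) (hE : HW n E) (hk : k = m + n) :
    HW k (brW D E) :=
  ⟨HA_sub (HA_Dw hD hE.1 (by omega)) (HA_Dw hE hD.1 (by omega)),
   HA_sub (HA_Dw hD hE.2 (by omega)) (HA_Dw hE hD.2 (by omega))⟩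

lemma HW_smulA {p m k : ℤ} {f : A F} {D : W F} (hf : HA p f) (hD : HW m D) (hk : k = p + m) :
    HW k (smulA f D) :=
  ⟨HA_mul hf hD.1 (by omega), HA_mul hf hD.2 (by omega)⟩

/-- The homogeneous component of degree `d` of `M`, described by coordinate support. -/
def sM (d : ℤ) : Submodule F (Mel F) where
  carrier := {u | (∀ a : Idx, 3 * degA a - 2 ≠ d → u.1 a = 0) ∧
      (∀ a : Idx, 3 * (degA a - 1) ≠ d → u.2.1.1 a = 0 ∧ u.2.1.2 a = 0) ∧
      (∀ a : Idx, 3 * (degA a - 1) + 2 ≠ d → u.2.2.1 a = 0 ∧ u.2.2.2 a = 0)}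
  add_mem' := by
    rintro u v ⟨u1, u2, u3⟩ ⟨v1, v2, v3⟩
    refine ⟨fun a ha => ?_, fun a ha => ?_, fun a ha => ?_⟩
    · show u.1 a + v.1 a = 0
      rw [u1 a ha, v1 a ha, add_zero]
    · constructor
      · show u.2.1.1 a + v.2.1.1 a = 0
        rw [(u2 a ha).1, (v2 a ha).1, add_zero]
      · show u.2.1.2 a + v.2.1.2 a = 0
        rw [(u2 a ha).2, (v2 a ha).2, add_zero]
    · constructor
      · show u.2.2.1 a + v.2.2.1 a = 0
        rw [(u3 a ha).1, (v3 a ha).1, add_zero]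
      · show u.2.2.2 a + v.2.2.2 a = 0
        rw [(u3 a ha).2, (v3 a ha).2, add_zero]
  zero_mem' := ⟨fun _ _ => rfl, fun _ _ => ⟨rfl, rfl⟩, fun _ _ => ⟨rfl, rfl⟩⟩
  smul_mem' := by
    rintro c u ⟨u1, u2, u3⟩
    refine ⟨fun a ha => ?_, fun a ha => ?_, fun a ha => ?_⟩
    · show c * u.1 a = 0
      rw [u1 a ha, mul_zero]
    · exact ⟨by show c * u.2.1.1 a = 0; rw [(u2 a ha).1, mul_zero],
        by show c * u.2.1.2 a = 0; rw [(u2 a ha).2, mul_zero]⟩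
    · exact ⟨by show c * u.2.2.1 a = 0; rw [(u3 a ha).1, mul_zero],
        by show c * u.2.2.2 a = 0; rw [(u3 a ha).2, mul_zero]⟩

lemma sM_of_eq {d d' : ℤ} {x : Mel F} (h : x ∈ sM d) (e : d = d') : x ∈ sM d' := e ▸ h

lemma memA {p : ℤ} {f : A F} (hf : HA p f) : ((f, 0, 0) : Mel F) ∈ sM (3 * p - 2) :=
  ⟨fun a ha => hf a (by omega), fun _ _ => ⟨rfl, rfl⟩, fun _ _ => ⟨rfl, rfl⟩⟩

lemma memW {q : ℤ} {D : W F} (hD : HW q D) : ((0, D, 0) : Mel F) ∈ sM (3 * q) :=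
  ⟨fun _ _ => rfl,
   fun a ha => ⟨hD.1 a (by omega), hD.2 a (by omega)⟩,
   fun _ _ => ⟨rfl, rfl⟩⟩

lemma memT {r : ℤ} {E : W F} (hE : HW r E) : ((0, 0, E) : Mel F) ∈ sM (3 * r + 2) :=
  ⟨fun _ _ => rfl, fun _ _ => ⟨rfl, rfl⟩,
   fun a ha => ⟨hE.1 a (by omega), hE.2 a (by omega)⟩⟩

lemma sM_cases {d : ℤ} {x : Mel F} (h : x ∈ sM d) :
    (∃ p : ℤ, d = 3 * p - 2 ∧ ∃ f : A F, HA p f ∧ x = (f, 0, 0)) ∨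
    (∃ q : ℤ, d = 3 * q ∧ ∃ D : W F, HW q D ∧ x = (0, D, 0)) ∨
    (∃ r : ℤ, d = 3 * r + 2 ∧ ∃ E : W F, HW r E ∧ x = (0, 0, E)) := by
  obtain ⟨h1, h2, h3⟩ := h
  have hmod : d % 3 = 0 ∨ d % 3 = 1 ∨ d % 3 = 2 := by omega
  rcases hmod with hm | hm | hm
  · refine Or.inr (Or.inl ⟨d / 3, by omega, x.2.1, ⟨?_, ?_⟩, ?_⟩)
    · intro a ha; exact (h2 a (by omega)).1
    · intro a ha; exact (h2 a (by omega)).2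
    · refine Prod.ext ?_ (Prod.ext rfl ?_)
      · funext a; exact h1 a (by omega)
      · refine Prod.ext ?_ ?_ <;> funext a
        · exact (h3 a (by omega)).1
        · exact (h3 a (by omega)).2
  · refine Or.inl ⟨d / 3 + 1, by omega, x.1, ?_, ?_⟩
    · intro a ha; exact h1 a (by omega)
    · refine Prod.ext rfl (Prod.ext ?_ ?_)
      · refine Prod.ext ?_ ?_ <;> funext a
        · exact (h2 a (by omega)).1
        · exact (h2 a (by omega)).2
      · refine Prod.ext ?_ ?_ <;> funext a
        · exact (h3 a (by omega)).1
        · exact (h3 a (by omega)).2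
  · refine Or.inr (Or.inr ⟨d / 3, by omega, x.2.2, ⟨?_, ?_⟩, ?_⟩)
    · intro a ha; exact (h3 a (by omega)).1
    · intro a ha; exact (h3 a (by omega)).2
    · refine Prod.ext ?_ (Prod.ext ?_ rfl)
      · funext a; exact h1 a (by omega)
      · refine Prod.ext ?_ ?_ <;> funext a
        · exact (h2 a (by omega)).1
        · exact (h2 a (by omega)).2

/-! Vanishing lemmas for the basic operations. -/

lemma mulA_zero (f : A F) : mulA f 0 = 0 := by
  funext a; unfold mulA
  apply Finset.sum_eq_zero; intro b _
  apply Finset.sum_eq_zero; intro c _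
  simp

lemma zero_mulA (f : A F) : mulA 0 f = 0 := by
  funext a; unfold mulA
  apply Finset.sum_eq_zero; intro b _
  apply Finset.sum_eq_zero; intro c _
  simp

lemma d1_zero : d1 (0 : A F) = 0 := by
  funext a; unfold d1; split <;> simp

lemma d2_zero : d2 (0 : A F) = 0 := by
  funext a; unfold d2; split <;> simp

lemma Dw_zero_left (g : A F) : Dw (0 : W F) g = 0 := by
  simp [Dw, zero_mulA]

lemma Dw_zero_right (D : W F) : Dw D (0 : A F) = 0 := by
  simp [Dw, d1_zero, d2_zero, mulA_zero]

lemma divW_zero : divW (0 : W F) = 0 := by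
  simp [divW, d1_zero, d2_zero]

lemma brW_zero_left (E : W F) : brW (0 : W F) E = 0 := by
  simp [brW, Dw_zero_left, Dw_zero_right]

lemma brW_zero_right (D : W F) : brW D (0 : W F) = 0 := by
  simp [brW, Dw_zero_left, Dw_zero_right]

lemma smulA_zero_left (D : W F) : smulA (0 : A F) D = 0 := by
  simp [smulA, zero_mulA]

lemma smulA_zero_right (f : A F) : smulA f (0 : W F) = 0 := by
  simp [smulA, mulA_zero]

/-! Commutativity of `mulA` and antisymmetry of the brackets. -/

lemma mulA_comm (f g : A F) : mulA f g = mulA g f := by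
  funext a; unfold mulA
  rw [Finset.sum_comm]
  apply Finset.sum_congr rfl; intro b _
  apply Finset.sum_congr rfl; intro c _
  have h : (c.1.val + b.1.val = a.1.val ∧ c.2.val + b.2.val = a.2.val) ↔
      (b.1.val + c.1.val = a.1.val ∧ b.2.val + c.2.val = a.2.val) := by omega
  rw [if_congr h rfl rfl, mul_comm]

lemma brW_swap (D E : W F) : brW D E = -brW E D := by
  refine Prod.ext ?_ ?_ <;> show _ = -(_ - _) <;> rw [neg_sub] <;> rfl

lemma brM_swap (u v : Mel F) : brM u v = -brM v u := by
  have hR : ((2 : F) • (mulA u.1 (d2 v.1) - mulA v.1 (d2 u.1)),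
      (2 : F) • (mulA v.1 (d1 u.1) - mulA u.1 (d1 v.1)))
      = -(((2 : F) • (mulA v.1 (d2 u.1) - mulA u.1 (d2 v.1)),
      (2 : F) • (mulA u.1 (d1 v.1) - mulA v.1 (d1 u.1))) : W F) := by
    refine Prod.ext ?_ ?_ <;> show (2 : F) • _ = -((2 : F) • _) <;>
      rw [← smul_neg, neg_sub]
  unfold brM
  rw [Prod.neg_mk, Prod.neg_mk]
  refine Prod.ext ?_ (Prod.ext ?_ ?_)
  · show _ = -(_)
    rw [mulA_comm v.2.2.1 u.2.2.2, mulA_comm v.2.2.2 u.2.2.1]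
    abel_nf
  · show _ = -(_)
    rw [brW_swap u.2.1 v.2.1]
    abel_nf
  · show _ = -(_)
    rw [hR]
    abel_nf

/-! Evaluation of the bracket on pure elements. -/

lemma brM_AA (f g : A F) : brM ((f, 0, 0) : Mel F) ((g, 0, 0) : Mel F)
    = (0, 0, ((2 : F) • (mulA g (d2 f) - mulA f (d2 g)),
        (2 : F) • (mulA f (d1 g) - mulA g (d1 f)))) := by
  unfold brM
  simp [Dw_zero_left, Dw_zero_right, divW_zero, zero_mulA, mulA_zero,
    brW_zero_left, brW_zero_right, smulA_zero_left, smulA_zero_right]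

lemma brM_AW (f : A F) (D : W F) : brM ((f, 0, 0) : Mel F) ((0, D, 0) : Mel F)
    = (-(Dw D f - (2 : F) • mulA (divW D) f), 0, 0) := by
  unfold brM
  simp [Dw_zero_left, Dw_zero_right, divW_zero, zero_mulA, mulA_zero, d1_zero, d2_zero,
    brW_zero_left, brW_zero_right, smulA_zero_left, smulA_zero_right]

lemma brM_AT (f : A F) (E : W F) : brM ((f, 0, 0) : Mel F) ((0, 0, E) : Mel F)
    = (0, smulA f E, 0) := by
  unfold brM
  simp [Dw_zero_left, Dw_zero_right, divW_zero, zero_mulA, mulA_zero, d1_zero, d2_zero,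
    brW_zero_left, brW_zero_right, smulA_zero_left, smulA_zero_right]

lemma brM_WW (D D' : W F) : brM ((0, D, 0) : Mel F) ((0, D', 0) : Mel F)
    = (0, brW D D', 0) := by
  unfold brM
  simp [Dw_zero_left, Dw_zero_right, divW_zero, zero_mulA, mulA_zero, d1_zero, d2_zero,
    brW_zero_left, brW_zero_right, smulA_zero_left, smulA_zero_right]

lemma brM_WT (D E : W F) : brM ((0, D, 0) : Mel F) ((0, 0, E) : Mel F)
    = (0, 0, brW D E + (2 : F) • smulA (divW D) E) := by
  unfold brM
  simp [Dw_zero_left, Dw_zero_right, divW_zero, zero_mulA, mulA_zero, d1_zero, d2_zero,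
    brW_zero_left, brW_zero_right, smulA_zero_left, smulA_zero_right]

lemma brM_TT (E E' : W F) : brM ((0, 0, E) : Mel F) ((0, 0, E') : Mel F)
    = (mulA E.1 E'.2 - mulA E.2 E'.1, 0, 0) := by
  unfold brM
  simp [Dw_zero_left, Dw_zero_right, divW_zero, zero_mulA, mulA_zero, d1_zero, d2_zero,
    brW_zero_left, brW_zero_right, smulA_zero_left, smulA_zero_right]

/-! The bracket respects the homogeneous components. -/

lemma br_AA {p p' : ℤ} {f g : A F} (hf : HA p f) (hg : HA p' g) :
    brM ((f, 0, 0) : Mel F) ((g, 0, 0) : Mel F) ∈ sM ((3 * p - 2) + (3 * p' - 2)) := by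
  rw [brM_AA]
  refine sM_of_eq (memT (r := p + p' - 2) ⟨?_, ?_⟩) (by ring)
  · exact HA_smul _ (HA_sub (HA_mul hg (HA_d2 hf) (by ring)) (HA_mul hf (HA_d2 hg) (by ring)))
  · exact HA_smul _ (HA_sub (HA_mul hf (HA_d1 hg) (by ring)) (HA_mul hg (HA_d1 hf) (by ring)))

lemma br_AW {p q : ℤ} {f : A F} {D : W F} (hf : HA p f) (hD : HW q D) :
    brM ((f, 0, 0) : Mel F) ((0, D, 0) : Mel F) ∈ sM ((3 * p - 2) + 3 * q) := by
  rw [brM_AW]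
  refine sM_of_eq (memA (p := q + p)
    (HA_neg (HA_sub (HA_Dw hD hf rfl)
      (HA_smul _ (HA_mul (HA_div hD rfl) hf rfl))))) (by ring)

lemma br_AT {p r : ℤ} {f : A F} {E : W F} (hf : HA p f) (hE : HW r E) :
    brM ((f, 0, 0) : Mel F) ((0, 0, E) : Mel F) ∈ sM ((3 * p - 2) + (3 * r + 2)) := by
  rw [brM_AT]
  exact sM_of_eq (memW (HW_smulA hf hE rfl)) (by ring)

lemma br_WW {q q' : ℤ} {D D' : W F} (hD : HW q D) (hD' : HW q' D') :
    brM ((0, D, 0) : Mel F) ((0, D', 0) : Mel F) ∈ sM (3 * q + 3 * q') := by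
  rw [brM_WW]
  exact sM_of_eq (memW (HW_br hD hD' rfl)) (by ring)

lemma br_WT {q r : ℤ} {D E : W F} (hD : HW q D) (hE : HW r E) :
    brM ((0, D, 0) : Mel F) ((0, 0, E) : Mel F) ∈ sM (3 * q + (3 * r + 2)) := by
  rw [brM_WT]
  refine sM_of_eq (memT (r := q + r)
    (HW_add (HW_br hD hE rfl) (HW_smul _ (HW_smulA (HA_div hD rfl) hE rfl)))) (by ring)

lemma br_TT {r r' : ℤ} {E E' : W F} (hE : HW r E) (hE' : HW r' E') :
    brM ((0, 0, E) : Mel F) ((0, 0, E') : Mel F) ∈ sM ((3 * r + 2) + (3 * r' + 2)) := by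
  rw [brM_TT]
  refine sM_of_eq (memA (p := r + r' + 2)
    (HA_sub (HA_mul hE.1 hE'.2 (by ring)) (HA_mul hE.2 hE'.1 (by ring)))) (by ring)

lemma sM_br {d e : ℤ} {x y : Mel F} (hx : x ∈ sM d) (hy : y ∈ sM e) :
    brM x y ∈ sM (d + e) := by
  rcases sM_cases hx with ⟨p, rfl, f, hf, rfl⟩ | ⟨q, rfl, D, hD, rfl⟩ | ⟨r, rfl, E, hE, rfl⟩ <;>
    rcases sM_cases hy with ⟨p', rfl, g, hg, rfl⟩ | ⟨q', rfl, D', hD', rfl⟩ |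
      ⟨r', rfl, E', hE', rfl⟩
  · exact br_AA hf hg
  · exact br_AW hf hD'
  · exact br_AT hf hE'
  · rw [brM_swap]
    exact neg_mem (sM_of_eq (br_AW hg hD) (by ring))
  · exact br_WW hD hD'
  · exact br_WT hD hE'
  · rw [brM_swap]
    exact neg_mem (sM_of_eq (br_AT hg hE) (by ring))
  · rw [brM_swap]
    exact neg_mem (sM_of_eq (br_WT hD' hE) (by ring))
  · exact br_TT hE hE'

/-! Identification of `Md` with `sM`. -/

lemma Md_le_sM (d : ℤ) : (Md d : Submodule F (Mel F)) ≤ sM d := by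
  rw [Md, Submodule.span_le]
  rintro m ((⟨b, rfl, rfl⟩ | ⟨b, i, rfl, rfl⟩) | ⟨b, i, rfl, rfl⟩)
  · exact memA (HA_X b)
  · fin_cases i
    · exact memW (D := wOf 0 b) ⟨by simpa [wOf] using HA_of_eq (HA_X b) (by ring),
        by simp [wOf]; exact HA_zero _⟩
    · exact memW (D := wOf 1 b) ⟨by simp [wOf]; exact HA_zero _,
        by simpa [wOf] using HA_of_eq (HA_X b) (by ring)⟩
  · fin_cases i
    · exact memT (E := wOf 0 b) ⟨by simpa [wOf] using HA_of_eq (HA_X b) (by ring),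
        by simp [wOf]; exact HA_zero _⟩
    · exact memT (E := wOf 1 b) ⟨by simp [wOf]; exact HA_zero _,
        by simpa [wOf] using HA_of_eq (HA_X b) (by ring)⟩

lemma sum_smul_X (f : A F) : (∑ b : Idx, f b • (X b : A F)) = f := by
  funext a
  rw [Finset.sum_apply]
  simp [X, mul_ite, Finset.sum_ite_eq]

lemma wOf_zero (b : Idx) : (wOf 0 b : W F) = (X b, 0) := rfl

lemma wOf_one (b : Idx) : (wOf 1 b : W F) = (0, X b) := rfl

lemma decomp (x : Mel F) :
    x = (∑ b : Idx, x.1 b • ιA (X b)) + (∑ b : Idx, x.2.1.1 b • ιW (wOf 0 b))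
      + (∑ b : Idx, x.2.1.2 b • ιW (wOf 1 b)) + (∑ b : Idx, x.2.2.1 b • ιT (wOf 0 b))
      + (∑ b : Idx, x.2.2.2 b • ιT (wOf 1 b)) := by
  refine Prod.ext ?_ (Prod.ext (Prod.ext ?_ ?_) (Prod.ext ?_ ?_)) <;>
    simp only [ιA, ιW, ιT, wOf_zero, wOf_one, Prod.fst_add, Prod.snd_add, Prod.fst_sum,
      Prod.snd_sum, Prod.smul_fst, Prod.smul_snd, smul_zero, Finset.sum_const_zero,
      add_zero, zero_add] <;>
    exact (sum_smul_X _).symm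

lemma gen_mem_Md_A (b : Idx) : ιA (X b) ∈ (Md (3 * degA b - 2) : Submodule F (Mel F)) :=
  Submodule.subset_span (Or.inl (Or.inl ⟨b, rfl, rfl⟩))

lemma gen_mem_Md_W (i : Fin 2) (b : Idx) :
    ιW (wOf i b) ∈ (Md (3 * (degA b - 1)) : Submodule F (Mel F)) :=
  Submodule.subset_span (Or.inl (Or.inr ⟨b, i, rfl, rfl⟩))

lemma gen_mem_Md_T (i : Fin 2) (b : Idx) :
    ιT (wOf i b) ∈ (Md (3 * (degA b - 1) + 2) : Submodule F (Mel F)) :=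
  Submodule.subset_span (Or.inr ⟨b, i, rfl, rfl⟩)

lemma sM_le_Md (d : ℤ) : sM d ≤ (Md d : Submodule F (Mel F)) := by
  rintro x ⟨h1, h2, h3⟩
  rw [decomp x]
  refine add_mem (add_mem (add_mem (add_mem ?_ ?_) ?_) ?_) ?_ <;>
    refine Submodule.sum_mem _ fun b _ => ?_
  · by_cases hb : x.1 b = 0
    · rw [hb, zero_smul]; exact zero_mem _
    · have : 3 * degA b - 2 = d := by
        by_contra hc; exact hb (h1 b hc)
      exact this ▸ Submodule.smul_mem _ _ (gen_mem_Md_A b)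
  · by_cases hb : x.2.1.1 b = 0
    · rw [hb, zero_smul]; exact zero_mem _
    · have : 3 * (degA b - 1) = d := by
        by_contra hc; exact hb (h2 b hc).1
      exact this ▸ Submodule.smul_mem _ _ (gen_mem_Md_W 0 b)
  · by_cases hb : x.2.1.2 b = 0
    · rw [hb, zero_smul]; exact zero_mem _
    · have : 3 * (degA b - 1) = d := by
        by_contra hc; exact hb (h2 b hc).2
      exact this ▸ Submodule.smul_mem _ _ (gen_mem_Md_W 1 b)
  · by_cases hb : x.2.2.1 b = 0
    · rw [hb, zero_smul]; exact zero_mem _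
    · have : 3 * (degA b - 1) + 2 = d := by
        by_contra hc; exact hb (h3 b hc).1
      exact this ▸ Submodule.smul_mem _ _ (gen_mem_Md_T 0 b)
  · by_cases hb : x.2.2.2 b = 0
    · rw [hb, zero_smul]; exact zero_mem _
    · have : 3 * (degA b - 1) + 2 = d := by
        by_contra hc; exact hb (h3 b hc).2
      exact this ▸ Submodule.smul_mem _ _ (gen_mem_Md_T 1 b)

/-- "Kernel" submodule: elements vanishing on all coordinates of degree `d`. -/
def Kd (d : ℤ) : Submodule F (Mel F) where
  carrier := {u | (∀ a : Idx, 3 * degA a - 2 = d → u.1 a = 0) ∧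
      (∀ a : Idx, 3 * (degA a - 1) = d → u.2.1.1 a = 0 ∧ u.2.1.2 a = 0) ∧
      (∀ a : Idx, 3 * (degA a - 1) + 2 = d → u.2.2.1 a = 0 ∧ u.2.2.2 a = 0)}
  add_mem' := by
    rintro u v ⟨u1, u2, u3⟩ ⟨v1, v2, v3⟩
    refine ⟨fun a ha => ?_, fun a ha => ?_, fun a ha => ?_⟩
    · show u.1 a + v.1 a = 0
      rw [u1 a ha, v1 a ha, add_zero]
    · exact ⟨by show u.2.1.1 a + v.2.1.1 a = 0; rw [(u2 a ha).1, (v2 a ha).1, add_zero],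
        by show u.2.1.2 a + v.2.1.2 a = 0; rw [(u2 a ha).2, (v2 a ha).2, add_zero]⟩
    · exact ⟨by show u.2.2.1 a + v.2.2.1 a = 0; rw [(u3 a ha).1, (v3 a ha).1, add_zero],
        by show u.2.2.2 a + v.2.2.2 a = 0; rw [(u3 a ha).2, (v3 a ha).2, add_zero]⟩
  zero_mem' := ⟨fun _ _ => rfl, fun _ _ => ⟨rfl, rfl⟩, fun _ _ => ⟨rfl, rfl⟩⟩
  smul_mem' := by
    rintro c u ⟨u1, u2, u3⟩
    refine ⟨fun a ha => ?_, fun a ha => ?_, fun a ha => ?_⟩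
    · show c * u.1 a = 0
      rw [u1 a ha, mul_zero]
    · exact ⟨by show c * u.2.1.1 a = 0; rw [(u2 a ha).1, mul_zero],
        by show c * u.2.1.2 a = 0; rw [(u2 a ha).2, mul_zero]⟩
    · exact ⟨by show c * u.2.2.1 a = 0; rw [(u3 a ha).1, mul_zero],
        by show c * u.2.2.2 a = 0; rw [(u3 a ha).2, mul_zero]⟩

lemma sM_le_Kd {d e : ℤ} (h : e ≠ d) : sM e ≤ (Kd d : Submodule F (Mel F)) := by
  rintro x ⟨h1, h2, h3⟩
  refine ⟨fun a ha => h1 a (by omega), fun a ha => h2 a (by omega), fun a ha => h3 a (by omega)⟩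

lemma sM_inf_Kd {d : ℤ} {x : Mel F} (hs : x ∈ sM d) (hk : x ∈ Kd d) : x = 0 := by
  obtain ⟨s1, s2, s3⟩ := hs
  obtain ⟨k1, k2, k3⟩ := hk
  refine Prod.ext ?_ (Prod.ext (Prod.ext ?_ ?_) (Prod.ext ?_ ?_)) <;> funext a
  · by_cases h : 3 * degA a - 2 = d
    · exact k1 a h
    · exact s1 a h
  · by_cases h : 3 * (degA a - 1) = d
    · exact (k2 a h).1
    · exact (s2 a h).1
  · by_cases h : 3 * (degA a - 1) = d
    · exact (k2 a h).2
    · exact (s2 a h).2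
  · by_cases h : 3 * (degA a - 1) + 2 = d
    · exact (k3 a h).1
    · exact (s3 a h).1
  · by_cases h : 3 * (degA a - 1) + 2 = d
    · exact (k3 a h).2
    · exact (s3 a h).2

end GradingAux


/-- The assignment `deg_M(D) = 3 deg(D)`, `deg_M(Ẽ) = 3 deg(E) + 2`,
`deg_M(f) = 3 deg(f) − 2` defines a `ℤ`-grading on the Melikian algebra:
the pieces `M_d` decompose `M` and `[M_d, M_e] ⊆ M_{d+e}` for all `d, e ∈ ℤ`. -/
theorem melikian_int_grading (F : Type*) [Field F] [CharP F 5] :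
    DirectSum.IsInternal (fun d : ℤ => (Md d : Submodule F (Mel F))) ∧
    ∀ (d e : ℤ) (x y : Mel F), x ∈ Md d → y ∈ Md e → brM x y ∈ Md (d + e) := by
  constructor
  · rw [DirectSum.isInternal_submodule_iff_iSupIndep_and_iSup_eq_top]
    constructor
    · rw [iSupIndep_def]
      intro d
      rw [Submodule.disjoint_def]
      intro x hxd hxrest
      have hs : x ∈ sM d := Md_le_sM d hxd
      have hk : x ∈ Kd d := by
        have hle : (⨆ e, ⨆ _ : e ≠ d, (Md e : Submodule F (Mel F))) ≤ Kd d :=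
          iSup_le fun e => iSup_le fun he => le_trans (Md_le_sM e) (sM_le_Kd he)
        exact hle hxrest
      exact sM_inf_Kd hs hk
    · rw [eq_top_iff]
      intro x _
      rw [decomp x]
      refine add_mem (add_mem (add_mem (add_mem ?_ ?_) ?_) ?_) ?_ <;>
        refine Submodule.sum_mem _ fun b _ => Submodule.smul_mem _ _ ?_
      · exact le_iSup (fun d : ℤ => (Md d : Submodule F (Mel F))) _ (gen_mem_Md_A b)
      · exact le_iSup (fun d : ℤ => (Md d : Submodule F (Mel F))) _ (gen_mem_Md_W 0 b)
      · exact le_iSup (fun d : ℤ => (Md d : Submodule F (Mel F))) _ (gen_mem_Md_W 1 b)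
      · exact le_iSup (fun d : ℤ => (Md d : Submodule F (Mel F))) _ (gen_mem_Md_T 0 b)
      · exact le_iSup (fun d : ℤ => (Md d : Submodule F (Mel F))) _ (gen_mem_Md_T 1 b)
  · intro d e x y hx hy
    exact sM_le_Md _ (sM_br (Md_le_sM d hx) (Md_le_sM e hy))

end Melikian
end

section
/- For a Lie algebra g over a field of characteristic p > 0 and a derivation γ of g, the squaring Sq(γ)(x,y) = Σ_{i=1}^{p−1} [γ^i(x), γ^{p−i}(y)] / (i!(p−i)!) is a 2-cocycle in Z²(g, g) for the adjoint representation. -/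
open scoped BigOperators

/-- The squaring `Sq(γ)(x,y) = Σ_{i=1}^{p−1} [γ^i(x), γ^{p−i}(y)] / (i!(p−i)!)` of a
derivation `γ` of a Lie algebra over a field of characteristic `p`. -/
def lieSq (F : Type*) [Field F] (L : Type*) [LieRing L] [LieAlgebra F L]
    (p : ℕ) (γ : L →ₗ[F] L) (x y : L) : L :=
  ∑ i ∈ Finset.Icc 1 (p - 1),
    ((Nat.factorial i * Nat.factorial (p - i) : ℕ) : F)⁻¹ • ⁅(⇑γ)^[i] x, (⇑γ)^[p - i] y⁆

open Finset


section helpers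

variable {F : Type*} [Field F] {L : Type*} [LieRing L] [LieAlgebra F L]

/-- Divided iterate `γ^n/n!` of a linear map. -/
noncomputable def Dop (γ : L →ₗ[F] L) (n : ℕ) : L → L :=
  fun x => (n.factorial : F)⁻¹ • (γ ^ n) x

lemma Dop_zero (γ : L →ₗ[F] L) (x : L) : Dop γ 0 x = x := by
  simp [Dop]

lemma Dop_eq (γ : L →ₗ[F] L) (n : ℕ) (x : L) :
    Dop γ n x = (n.factorial : F)⁻¹ • (⇑γ)^[n] x := by
  simp [Dop, ← Module.End.pow_apply]

lemma lie_sum' {ι : Type*} (s : Finset ι) (x : L) (f : ι → L) :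
    ⁅x, ∑ i ∈ s, f i⁆ = ∑ i ∈ s, ⁅x, f i⁆ := by
  induction s using Finset.cons_induction with
  | empty => simp
  | cons a s ha ih => simp [Finset.sum_cons, ih]

lemma sum_lie' {ι : Type*} (s : Finset ι) (x : L) (f : ι → L) :
    ⁅∑ i ∈ s, f i, x⁆ = ∑ i ∈ s, ⁅f i, x⁆ := by
  induction s using Finset.cons_induction with
  | empty => simp
  | cons a s ha ih => simp [Finset.sum_cons, ih]

lemma gamma_Dop (γ : L →ₗ[F] L) (n : ℕ) (h : ((n + 1 : ℕ) : F) ≠ 0) (x : L) :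
    γ (Dop γ n x) = ((n + 1 : ℕ) : F) • Dop γ (n + 1) x := by
  simp only [Dop, map_smul, smul_smul]
  rw [pow_succ' γ n]
  congr 1
  rw [Nat.factorial_succ, Nat.cast_mul, mul_inv, ← mul_assoc, mul_inv_cancel₀ h, one_mul]

lemma Dop_lie (γ : L →ₗ[F] L) (hγ : ∀ x y : L, γ ⁅x, y⁆ = ⁅γ x, y⁆ + ⁅x, γ y⁆)
    (n : ℕ) (hn : (n.factorial : F) ≠ 0) (x y : L) :
    Dop γ n ⁅x, y⁆ = ∑ a ∈ range (n + 1), ⁅Dop γ a x, Dop γ (n - a) y⁆ := by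
  induction n with
  | zero => simp [Dop_zero]
  | succ n ih =>
    have hdvd : ∀ m : ℕ, m ∣ (n + 1).factorial → (m : F) ≠ 0 := by
      intro m hm h0
      obtain ⟨k, hk⟩ := hm
      exact hn (by rw [hk, Nat.cast_mul, h0, zero_mul])
    have hn' : (n.factorial : F) ≠ 0 :=
      hdvd _ (Nat.factorial_dvd_factorial (Nat.le_succ n))
    have hsucc : ((n + 1 : ℕ) : F) ≠ 0 :=
      hdvd _ (Nat.dvd_factorial (Nat.succ_pos n) le_rfl)
    apply smul_right_injective L hsucc
    show ((n + 1 : ℕ) : F) • Dop γ (n + 1) ⁅x, y⁆ = ((n + 1 : ℕ) : F) • ∑ a ∈ range (n + 1 + 1), ⁅Dop γ a x, Dop γ (n + 1 - a) y⁆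
    have lhs : ((n + 1 : ℕ) : F) • Dop γ (n + 1) ⁅x, y⁆
        = ∑ a ∈ range (n + 1),
            (((a + 1 : ℕ) : F) • ⁅Dop γ (a + 1) x, Dop γ (n - a) y⁆
              + ((n - a + 1 : ℕ) : F) • ⁅Dop γ a x, Dop γ (n - a + 1) y⁆) := by
      rw [← gamma_Dop γ n hsucc, ih hn', map_sum]
      refine Finset.sum_congr rfl fun a ha => ?_
      have ha' : a ≤ n := by simpa using Nat.lt_succ_iff.mp (Finset.mem_range.mp ha)
      have ha1 : ((a + 1 : ℕ) : F) ≠ 0 :=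
        hdvd _ (Nat.dvd_factorial (Nat.succ_pos a) (by omega))
      have ha2 : ((n - a + 1 : ℕ) : F) ≠ 0 :=
        hdvd _ (Nat.dvd_factorial (Nat.succ_pos _) (by omega))
      rw [hγ, gamma_Dop γ a ha1, gamma_Dop γ (n - a) ha2, smul_lie, lie_smul]
    rw [lhs, Finset.smul_sum]
    have rhs : ∀ a ∈ range (n + 2),
        ((n + 1 : ℕ) : F) • ⁅Dop γ a x, Dop γ (n + 1 - a) y⁆
          = ((a : ℕ) : F) • ⁅Dop γ a x, Dop γ (n + 1 - a) y⁆
            + ((n + 1 - a : ℕ) : F) • ⁅Dop γ a x, Dop γ (n + 1 - a) y⁆ := by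
      intro a ha
      rw [← add_smul, ← Nat.cast_add,
        show a + (n + 1 - a) = n + 1 by
          have := Finset.mem_range.mp ha; omega]
    rw [Finset.sum_congr rfl rhs, Finset.sum_add_distrib]
    have e1 : ∑ a ∈ range (n + 2), ((a : ℕ) : F) • ⁅Dop γ a x, Dop γ (n + 1 - a) y⁆
        = ∑ a ∈ range (n + 1), ((a + 1 : ℕ) : F) • ⁅Dop γ (a + 1) x, Dop γ (n - a) y⁆ := by
      rw [Finset.sum_range_succ']
      simp [Nat.succ_sub_succ]
    have e2 : ∑ a ∈ range (n + 2), ((n + 1 - a : ℕ) : F) • ⁅Dop γ a x, Dop γ (n + 1 - a) y⁆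
        = ∑ a ∈ range (n + 1), ((n - a + 1 : ℕ) : F) • ⁅Dop γ a x, Dop γ (n - a + 1) y⁆ := by
      rw [Finset.sum_range_succ]
      simp only [Nat.sub_self, Nat.cast_zero, zero_smul, add_zero]
      refine Finset.sum_congr rfl fun a ha => ?_
      have ha' : a ≤ n := Nat.lt_succ_iff.mp (Finset.mem_range.mp ha)
      rw [show n + 1 - a = n - a + 1 by omega]
    rw [Finset.sum_add_distrib, ← e1, ← e2]

end helpers


lemma jac3 {L : Type*} [LieRing L] (U V W : L) :
    ⁅⁅U, W⁆, V⁆ - ⁅⁅U, V⁆, W⁆ - ⁅⁅V, W⁆, U⁆ = 0 := by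
  have h1 : ⁅⁅U, W⁆, V⁆ = ⁅U, ⁅W, V⁆⁆ - ⁅W, ⁅U, V⁆⁆ := lie_lie U W V
  have h2 : ⁅⁅V, W⁆, U⁆ = - ⁅U, ⁅V, W⁆⁆ := (lie_skew ⁅V, W⁆ U).symm
  have h3 : ⁅W, ⁅U, V⁆⁆ = - ⁅⁅U, V⁆, W⁆ := neg_eq_iff_eq_neg.mp (lie_skew ⁅U, V⁆ W)
  have h4 : ⁅U, ⁅W, V⁆⁆ = - ⁅U, ⁅V, W⁆⁆ := by rw [← lie_skew W V, lie_neg]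
  have h5 : ⁅U, ⁅V, W⁆⁆ = ⁅⁅U, V⁆, W⁆ + ⁅V, ⁅U, W⁆⁆ := leibniz_lie U V W
  rw [h1, h2, h3, h4, h5]
  abel

lemma lie_swap3 {L : Type*} [LieRing L] (a b c : L) : ⁅⁅a, b⁆, c⁆ = ⁅c, ⁅b, a⁆⁆ := by
  rw [← lie_skew ⁅a, b⁆ c, ← lie_skew b a, lie_neg]

/-- rewriting lieSq via Dop -/
lemma lieSq_eq (F : Type*) [Field F] (L : Type*) [LieRing L] [LieAlgebra F L]
    (p : ℕ) (γ : L →ₗ[F] L) (x y : L) :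
    lieSq F L p γ x y = ∑ i ∈ Finset.Icc 1 (p - 1), ⁅Dop γ i x, Dop γ (p - i) y⁆ := by
  unfold lieSq
  refine Finset.sum_congr rfl fun i _ => ?_
  rw [Dop_eq, Dop_eq, smul_lie, lie_smul, smul_smul, ← mul_inv, ← Nat.cast_mul]

lemma sum_Icc_reflect {M : Type*} [AddCommMonoid M] (p : ℕ) (f : ℕ → M) :
    ∑ i ∈ Finset.Icc 1 (p - 1), f i = ∑ i ∈ Finset.Icc 1 (p - 1), f (p - i) := by
  refine Finset.sum_nbij' (fun i => p - i) (fun i => p - i) ?_ ?_ ?_ ?_ ?_ <;>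
    intro a ha <;> simp only [Finset.mem_Icc] at ha
  · simp only [Finset.mem_Icc]; omega
  · simp only [Finset.mem_Icc]; omega
  · show p - (p - a) = a; omega
  · show p - (p - a) = a; omega
  · show f a = f (p - (p - a)); rw [show p - (p - a) = a by omega]

/-- For a Lie algebra `g` over a field of characteristic `p > 0` and a derivation `γ`
of `g`, the squaring `Sq(γ)` is a `2`-cocycle in `Z²(g, g)` for the adjoint
representation: it is alternating and satisfies the cocycle identity. -/
theorem squaring_is_two_cocycle (F : Type*) [Field F] (p : ℕ) (hp : p.Prime)
    [CharP F p] (L : Type*) [LieRing L] [LieAlgebra F L] (γ : L →ₗ[F] L)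
    (hγ : ∀ x y : L, γ ⁅x, y⁆ = ⁅γ x, y⁆ + ⁅x, γ y⁆) :
    (∀ x : L, lieSq F L p γ x x = 0) ∧
    (∀ x y : L, lieSq F L p γ x y = - lieSq F L p γ y x) ∧
    (∀ x y z : L,
      ⁅x, lieSq F L p γ y z⁆ - ⁅y, lieSq F L p γ x z⁆ + ⁅z, lieSq F L p γ x y⁆
        - lieSq F L p γ ⁅x, y⁆ z + lieSq F L p γ ⁅x, z⁆ y - lieSq F L p γ ⁅y, z⁆ x
        = 0) := by
  have hp2 : 2 ≤ p := hp.two_le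
  have hfac : ∀ n : ℕ, n ≤ p - 1 → ((n.factorial : ℕ) : F) ≠ 0 := by
    intro n hn h
    have hd : p ∣ n.factorial := (CharP.cast_eq_zero_iff F p _).mp h
    have := (Nat.Prime.dvd_factorial hp).mp hd
    omega
  refine ⟨?_, ?_, ?_⟩
  · -- alternating
    intro x
    rw [lieSq_eq]
    refine Finset.sum_involution (fun i _ => p - i) ?_ ?_ ?_ ?_
    · intro i hi
      simp only [Finset.mem_Icc] at hi
      show ⁅Dop γ i x, Dop γ (p - i) x⁆ + ⁅Dop γ (p - i) x, Dop γ (p - (p - i)) x⁆ = 0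
      rw [show p - (p - i) = i by omega, ← lie_skew (Dop γ (p - i) x) (Dop γ i x)]
      exact add_neg_cancel _
    · intro i hi h
      intro hip
      have hpi : p - i = i := hip
      apply h
      show ⁅Dop γ i x, Dop γ (p - i) x⁆ = 0
      rw [hpi]
      exact lie_self _
    · intro i hi
      simp only [Finset.mem_Icc] at hi
      simp only [Finset.mem_Icc]
      omega
    · intro i hi
      simp only [Finset.mem_Icc] at hi
      show p - (p - i) = i
      omega
  · -- skew-symmetric
    intro x y
    rw [lieSq_eq, lieSq_eq, sum_Icc_reflect, ← Finset.sum_neg_distrib]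
    refine Finset.sum_congr rfl fun i hi => ?_
    simp only [Finset.mem_Icc] at hi
    rw [show p - (p - i) = i by omega]
    exact (lie_skew _ _).symm
  · -- cocycle identity
    intro x y z
    -- expansions of the three "bracket with Sq" terms
    have hT1 : ⁅x, lieSq F L p γ y z⁆
        = ∑ i ∈ Finset.Icc 1 (p - 1), ⁅⁅x, Dop γ i y⁆, Dop γ (p - i) z⁆
          + ∑ i ∈ Finset.Icc 1 (p - 1), ⁅Dop γ i y, ⁅x, Dop γ (p - i) z⁆⁆ := by
      rw [lieSq_eq, lie_sum', ← Finset.sum_add_distrib]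
      exact Finset.sum_congr rfl fun i _ => leibniz_lie x _ _
    have hT2 : ⁅y, lieSq F L p γ x z⁆
        = ∑ i ∈ Finset.Icc 1 (p - 1), ⁅⁅y, Dop γ i x⁆, Dop γ (p - i) z⁆
          + ∑ i ∈ Finset.Icc 1 (p - 1), ⁅Dop γ i x, ⁅y, Dop γ (p - i) z⁆⁆ := by
      rw [lieSq_eq, lie_sum', ← Finset.sum_add_distrib]
      exact Finset.sum_congr rfl fun i _ => leibniz_lie y _ _
    have hT3 : ⁅z, lieSq F L p γ x y⁆
        = ∑ i ∈ Finset.Icc 1 (p - 1), ⁅⁅z, Dop γ i x⁆, Dop γ (p - i) y⁆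
          + ∑ i ∈ Finset.Icc 1 (p - 1), ⁅Dop γ i x, ⁅z, Dop γ (p - i) y⁆⁆ := by
      rw [lieSq_eq, lie_sum', ← Finset.sum_add_distrib]
      exact Finset.sum_congr rfl fun i _ => leibniz_lie z _ _
    -- expansions of the three "Sq of a bracket" terms
    have hexp : ∀ (u v : L) (i : ℕ), i ∈ Finset.Icc 1 (p - 1) →
        ∀ w : L, ⁅Dop γ i ⁅u, v⁆, w⁆
          = ⁅⁅u, Dop γ i v⁆, w⁆ + ⁅⁅Dop γ i u, v⁆, w⁆
            + ∑ a ∈ Finset.Ico 1 i, ⁅⁅Dop γ a u, Dop γ (i - a) v⁆, w⁆ := by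
      intro u v i hi w
      simp only [Finset.mem_Icc] at hi
      rw [Dop_lie γ hγ i (hfac i hi.2), sum_lie', Finset.sum_range_succ,
        Finset.range_eq_Ico, Finset.sum_eq_sum_Ico_succ_bot (by omega : 0 < i)]
      rw [Dop_zero, Nat.sub_zero, Nat.sub_self, Dop_zero]
      abel
    have hT4 : lieSq F L p γ ⁅x, y⁆ z
        = ∑ i ∈ Finset.Icc 1 (p - 1), ⁅⁅x, Dop γ i y⁆, Dop γ (p - i) z⁆
          + ∑ i ∈ Finset.Icc 1 (p - 1), ⁅⁅Dop γ i x, y⁆, Dop γ (p - i) z⁆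
          + ∑ i ∈ Finset.Icc 1 (p - 1), ∑ a ∈ Finset.Ico 1 i,
              ⁅⁅Dop γ a x, Dop γ (i - a) y⁆, Dop γ (p - i) z⁆ := by
      rw [lieSq_eq, ← Finset.sum_add_distrib, ← Finset.sum_add_distrib]
      exact Finset.sum_congr rfl fun i hi => hexp x y i hi _
    have hT5 : lieSq F L p γ ⁅x, z⁆ y
        = ∑ i ∈ Finset.Icc 1 (p - 1), ⁅⁅x, Dop γ i z⁆, Dop γ (p - i) y⁆
          + ∑ i ∈ Finset.Icc 1 (p - 1), ⁅⁅Dop γ i x, z⁆, Dop γ (p - i) y⁆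
          + ∑ i ∈ Finset.Icc 1 (p - 1), ∑ a ∈ Finset.Ico 1 i,
              ⁅⁅Dop γ a x, Dop γ (i - a) z⁆, Dop γ (p - i) y⁆ := by
      rw [lieSq_eq, ← Finset.sum_add_distrib, ← Finset.sum_add_distrib]
      exact Finset.sum_congr rfl fun i hi => hexp x z i hi _
    have hT6 : lieSq F L p γ ⁅y, z⁆ x
        = ∑ i ∈ Finset.Icc 1 (p - 1), ⁅⁅y, Dop γ i z⁆, Dop γ (p - i) x⁆
          + ∑ i ∈ Finset.Icc 1 (p - 1), ⁅⁅Dop γ i y, z⁆, Dop γ (p - i) x⁆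
          + ∑ i ∈ Finset.Icc 1 (p - 1), ∑ a ∈ Finset.Ico 1 i,
              ⁅⁅Dop γ a y, Dop γ (i - a) z⁆, Dop γ (p - i) x⁆ := by
      rw [lieSq_eq, ← Finset.sum_add_distrib, ← Finset.sum_add_distrib]
      exact Finset.sum_congr rfl fun i hi => hexp y z i hi _
    -- reflection identities
    have r1 : ∑ i ∈ Finset.Icc 1 (p - 1), ⁅⁅x, Dop γ i z⁆, Dop γ (p - i) y⁆
        = - ∑ i ∈ Finset.Icc 1 (p - 1), ⁅Dop γ i y, ⁅x, Dop γ (p - i) z⁆⁆ := by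
      rw [sum_Icc_reflect, ← Finset.sum_neg_distrib]
      refine Finset.sum_congr rfl fun i hi => ?_
      simp only [Finset.mem_Icc] at hi
      rw [show p - (p - i) = i by omega]
      exact (lie_skew _ _).symm
    have r2 : ∑ i ∈ Finset.Icc 1 (p - 1), ⁅⁅y, Dop γ i z⁆, Dop γ (p - i) x⁆
        = - ∑ i ∈ Finset.Icc 1 (p - 1), ⁅Dop γ i x, ⁅y, Dop γ (p - i) z⁆⁆ := by
      rw [sum_Icc_reflect, ← Finset.sum_neg_distrib]
      refine Finset.sum_congr rfl fun i hi => ?_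
      simp only [Finset.mem_Icc] at hi
      rw [show p - (p - i) = i by omega]
      exact (lie_skew _ _).symm
    have r3 : ∑ i ∈ Finset.Icc 1 (p - 1), ⁅⁅Dop γ i y, z⁆, Dop γ (p - i) x⁆
        = ∑ i ∈ Finset.Icc 1 (p - 1), ⁅Dop γ i x, ⁅z, Dop γ (p - i) y⁆⁆ := by
      rw [sum_Icc_reflect]
      refine Finset.sum_congr rfl fun i hi => ?_
      simp only [Finset.mem_Icc] at hi
      rw [show p - (p - i) = i by omega]
      exact lie_swap3 _ _ _
    have r4 : ∑ i ∈ Finset.Icc 1 (p - 1), ⁅⁅Dop γ i x, y⁆, Dop γ (p - i) z⁆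
        = - ∑ i ∈ Finset.Icc 1 (p - 1), ⁅⁅y, Dop γ i x⁆, Dop γ (p - i) z⁆ := by
      rw [← Finset.sum_neg_distrib]
      refine Finset.sum_congr rfl fun i _ => ?_
      rw [← lie_skew y, neg_lie, neg_neg]
    have r5 : ∑ i ∈ Finset.Icc 1 (p - 1), ⁅⁅Dop γ i x, z⁆, Dop γ (p - i) y⁆
        = - ∑ i ∈ Finset.Icc 1 (p - 1), ⁅⁅z, Dop γ i x⁆, Dop γ (p - i) y⁆ := by
      rw [← Finset.sum_neg_distrib]
      refine Finset.sum_congr rfl fun i _ => ?_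
      rw [← lie_skew z, neg_lie, neg_neg]
    -- reindexing of the interior double sums
    have hJ2 : ∑ i ∈ Finset.Icc 1 (p - 1), ∑ a ∈ Finset.Ico 1 i,
          ⁅⁅Dop γ a x, Dop γ (i - a) z⁆, Dop γ (p - i) y⁆
        = ∑ i ∈ Finset.Icc 1 (p - 1), ∑ a ∈ Finset.Ico 1 i,
          ⁅⁅Dop γ a x, Dop γ (p - i) z⁆, Dop γ (i - a) y⁆ := by
      rw [Finset.sum_sigma', Finset.sum_sigma']
      refine Finset.sum_nbij' (fun s => ⟨s.2 + (p - s.1), s.2⟩)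
        (fun s => ⟨s.2 + (p - s.1), s.2⟩) ?_ ?_ ?_ ?_ ?_ <;>
        rintro ⟨i, a⟩ ha <;>
        simp only [Finset.mem_sigma, Finset.mem_Icc, Finset.mem_Ico] at *
      · omega
      · omega
      · apply Sigma.ext <;> simp <;> omega
      · apply Sigma.ext <;> simp <;> omega
      · rw [show p - (a + (p - i)) = i - a by omega, show a + (p - i) - a = p - i by omega]
    have hJ3 : ∑ i ∈ Finset.Icc 1 (p - 1), ∑ a ∈ Finset.Ico 1 i,
          ⁅⁅Dop γ a y, Dop γ (i - a) z⁆, Dop γ (p - i) x⁆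
        = ∑ i ∈ Finset.Icc 1 (p - 1), ∑ a ∈ Finset.Ico 1 i,
          ⁅⁅Dop γ (i - a) y, Dop γ (p - i) z⁆, Dop γ a x⁆ := by
      rw [Finset.sum_sigma', Finset.sum_sigma']
      refine Finset.sum_nbij' (fun s => ⟨s.2 + (p - s.1), p - s.1⟩)
        (fun s => ⟨p - s.2, s.1 - s.2⟩) ?_ ?_ ?_ ?_ ?_ <;>
        rintro ⟨i, a⟩ ha <;>
        simp only [Finset.mem_sigma, Finset.mem_Icc, Finset.mem_Ico] at *
      · omega
      · omega
      · apply Sigma.ext <;> simp <;> omega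
      · apply Sigma.ext <;> simp <;> omega
      · rw [show a + (p - i) - (p - i) = a by omega, show p - (a + (p - i)) = i - a by omega]
    -- the interior terms cancel by the Jacobi identity
    have hJac : ∑ i ∈ Finset.Icc 1 (p - 1), ∑ a ∈ Finset.Ico 1 i,
          ⁅⁅Dop γ a x, Dop γ (p - i) z⁆, Dop γ (i - a) y⁆
        - ∑ i ∈ Finset.Icc 1 (p - 1), ∑ a ∈ Finset.Ico 1 i,
          ⁅⁅Dop γ a x, Dop γ (i - a) y⁆, Dop γ (p - i) z⁆
        - ∑ i ∈ Finset.Icc 1 (p - 1), ∑ a ∈ Finset.Ico 1 i,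
          ⁅⁅Dop γ (i - a) y, Dop γ (p - i) z⁆, Dop γ a x⁆ = 0 := by
      rw [sub_sub, ← Finset.sum_add_distrib, ← Finset.sum_sub_distrib]
      refine Finset.sum_eq_zero fun i _ => ?_
      rw [← Finset.sum_add_distrib, ← Finset.sum_sub_distrib]
      refine Finset.sum_eq_zero fun a _ => ?_
      rw [← sub_sub]
      exact jac3 _ _ _
    rw [hT1, hT2, hT3, hT4, hT5, hT6, r1, r2, r3, r4, r5, hJ2, hJ3, ← hJac]
    abel
end
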